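/- Let A ∈ ℝ^{n×n}, B ∈ ℝ^{n×m}, K ∈ ℝ^{m×n}, and let Ω ⊆ ℝ^n, W ⊆ ℝ^n satisfy (A + BK)e + w ∈ Ω for all e ∈ Ω, w ∈ W. Let 𝕏 ⊆ ℝ^n and 𝕌 ⊆ ℝ^m be constraint sets. Suppose given a nominal trajectory (z_k, v_k)_{k∈ℕ} with z_{k+1} = A z_k + B v_k, z_k ∈ 𝕏 ⊖ Ω and v_k ∈ 𝕌 ⊖ KΩ for all k, and a true trajectory x_{k+1} = A x_k + B u_k + w_k with w_k ∈ W, where u_k := v_k + K(x_k − z_k) and x_0 − z_0 ∈ Ω. Then for every k ∈ ℕ: x_k − z_k ∈ Ω, x_k ∈ 𝕏, and u_k ∈ 𝕌. That is, the tube MPC control law guarantees robust satisfaction of the state and input constraints for all disturbance realizations. -/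

import Mathlib

/-! The error `e = x - z` between the true and the nominal state obeys `e⁺ = (A + BK) e + w`,
so it never leaves the invariant set `Ω`. Hence `x = z + e` and `u = v + K e` are nominal points
shifted by an element of `Ω`, resp. `KΩ`, which keeps them inside `𝕏` and `𝕌` by the definition
of the tightened sets. -/

open Matrix

/-- Pontryagin (Minkowski) set difference: `X ⊖ Y = {z | z + y ∈ X ∀ y ∈ Y}`. -/
def pontryaginDiff {E : Type*} [Add E] (X Y : Set E) : Set E :=
  {z | ∀ y ∈ Y, z + y ∈ X}

theorem mem_of_mem_pontryaginDiff_of_sub_mem {E : Type*} [AddCommGroup E] {X Y : Set E}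
    {z x : E} (hz : z ∈ pontryaginDiff X Y) (hxz : x - z ∈ Y) : x ∈ X := by
  simpa using hz _ hxz

def IsRobustPositivelyInvariant {α β : Type*} (f : α → β → α) (Ω : Set α) (W : Set β) :
    Prop :=
  ∀ e ∈ Ω, ∀ w ∈ W, f e w ∈ Ω

theorem IsRobustPositivelyInvariant.mem_of_iterate {α β : Type*} {f : α → β → α}
    {Ω : Set α} {W : Set β} (hΩ : IsRobustPositivelyInvariant f Ω W) {e : ℕ → α}
    {w : ℕ → β} (he : ∀ k, e (k + 1) = f (e k) (w k)) (hw : ∀ k, w k ∈ W)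
    (h0 : e 0 ∈ Ω) : ∀ k, e k ∈ Ω
  | 0 => h0
  | k + 1 => he k ▸ hΩ _ (hΩ.mem_of_iterate he hw h0 k) _ (hw k)

theorem feedback_error_step {R ι κ : Type*} [Ring R] [Fintype ι] [Fintype κ]
    (A : Matrix ι ι R) (B : Matrix ι κ R) (K : Matrix κ ι R) (x z w : ι → R) (v : κ → R) :
    (A *ᵥ x + B *ᵥ (v + K *ᵥ (x - z)) + w) - (A *ᵥ z + B *ᵥ v) =
      (A + B * K) *ᵥ (x - z) + w := by
  simp only [add_mulVec, mulVec_add, mulVec_sub, ← mulVec_mulVec]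
  abel

/-- Robust constraint satisfaction of tube MPC: if the nominal trajectory
satisfies the tightened constraints `z_k ∈ 𝕏 ⊖ Ω`, `v_k ∈ 𝕌 ⊖ KΩ`, the error
set `Ω` is robust positively invariant for `e⁺ = (A+BK)e + w`, `w ∈ W`, and the
control `u_k = v_k + K(x_k − z_k)` is applied to the true system
`x_{k+1} = Ax_k + Bu_k + w_k` with `x_0 − z_0 ∈ Ω`, then for all `k` the error
`x_k − z_k` stays in `Ω` and the true state and input constraints `x_k ∈ 𝕏`,
`u_k ∈ 𝕌` hold. -/
theorem tube_mpc_robust_constraint_satisfaction {n m : ℕ}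
    (A : Matrix (Fin n) (Fin n) ℝ) (B : Matrix (Fin n) (Fin m) ℝ)
    (K : Matrix (Fin m) (Fin n) ℝ)
    (Ω W 𝕏 : Set (Fin n → ℝ)) (𝕌 : Set (Fin m → ℝ))
    (hinv : ∀ e ∈ Ω, ∀ w ∈ W, (A + B * K) *ᵥ e + w ∈ Ω)
    (z x : ℕ → Fin n → ℝ) (v u : ℕ → Fin m → ℝ) (w : ℕ → Fin n → ℝ)
    (hz : ∀ k, z (k + 1) = A *ᵥ z k + B *ᵥ v k)
    (hzX : ∀ k, z k ∈ pontryaginDiff 𝕏 Ω)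
    (hvU : ∀ k, v k ∈ pontryaginDiff 𝕌 ((fun e => K *ᵥ e) '' Ω))
    (hw : ∀ k, w k ∈ W)
    (hu : ∀ k, u k = v k + K *ᵥ (x k - z k))
    (hx : ∀ k, x (k + 1) = A *ᵥ x k + B *ᵥ u k + w k)
    (h0 : x 0 - z 0 ∈ Ω) :
    ∀ k, x k - z k ∈ Ω ∧ x k ∈ 𝕏 ∧ u k ∈ 𝕌 := by
  have hΩ : IsRobustPositivelyInvariant (fun e w => (A + B * K) *ᵥ e + w) Ω W := hinv
  have herr : ∀ k, x k - z k ∈ Ω := hΩ.mem_of_iterate (fun k => by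
    rw [hx, hz, hu, feedback_error_step]) hw h0
  intro k
  refine ⟨herr k, mem_of_mem_pontryaginDiff_of_sub_mem (hzX k) (herr k), ?_⟩
  rw [hu]
  exact hvU k _ (Set.mem_image_of_mem _ (herr k))
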